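/- Let S = ⟨e, e+d, e+2d⟩ with gcd(e,d) = 1 and e ≥ 3 (embedding dimension 3 arithmetic case). Then d_max(S) = ⌈e/2⌉. -/

import Mathlib

open Finset

/-- The set of factorizations of `n` over the generating tuple `g`. -/
def Fac {t : ℕ} (g : Fin (t + 1) → ℕ) (n : ℕ) : Set (Fin (t + 1) → ℕ) :=
  {c | ∑ i, c i * g i = n}

/-- The numerical semigroup generated by the tuple `g`. -/
def Sg {t : ℕ} (g : Fin (t + 1) → ℕ) : Set ℕ :=
  {n | ∃ c : Fin (t + 1) → ℕ, ∑ i, c i * g i = n}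

/-- The order of `n`: the maximal length of a factorization of `n` over `g`. -/
noncomputable def ordOf {t : ℕ} (g : Fin (t + 1) → ℕ) (n : ℕ) : ℕ :=
  sSup {r | ∃ c ∈ Fac g n, ∑ i, c i = r}

/-- The minimal length of a factorization of `n` over `g`. -/
noncomputable def minordOf {t : ℕ} (g : Fin (t + 1) → ℕ) (n : ℕ) : ℕ :=
  sInf {r | ∃ c ∈ Fac g n, ∑ i, c i = r}

/-- The denumerant of `n` with respect to `g`. -/
noncomputable def denum {t : ℕ} (g : Fin (t + 1) → ℕ) (n : ℕ) : ℕ :=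
  (Fac g n).ncard

/-- The maximal denumerant of an element: the number of maximal-length factorizations. -/
noncomputable def dmaxEl {t : ℕ} (g : Fin (t + 1) → ℕ) (n : ℕ) : ℕ :=
  {c ∈ Fac g n | ∑ i, c i = ordOf g n}.ncard

/-- The maximal denumerant of the semigroup generated by `g`. -/
noncomputable def dmax {t : ℕ} (g : Fin (t + 1) → ℕ) : ℕ :=
  sSup {m | ∃ n ∈ Sg g, dmaxEl g n = m}

/-- The generating tuple `D` of the blowup: `{e, a₁ - e, …, a_t - e}`. -/
def blowD {t : ℕ} (g : Fin (t + 1) → ℕ) : Fin (t + 1) → ℕ :=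
  fun i => if i = 0 then g 0 else g i - g 0

/-- The adjustment of `n`:  `n - ord(n) * e`. -/
noncomputable def adj {t : ℕ} (g : Fin (t + 1) → ℕ) (n : ℕ) : ℕ :=
  n - ordOf g n * g 0

/-- The Apery set with respect to `u` of the semigroup generated by `g`. -/
def Ap {t : ℕ} (g : Fin (t + 1) → ℕ) (u : ℕ) : Set ℕ :=
  {w ∈ Sg g | ¬ ∃ b ∈ Sg g, w = b + u}

/-- `g` is the (strictly increasing) minimal generating tuple of a numerical semigroup
with multiplicity `g 0`. -/
structure IsNumSgp {t : ℕ} (g : Fin (t + 1) → ℕ) : Prop where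
  mono : StrictMono g
  pos : 0 < g 0
  gcd_eq_one : Finset.gcd Finset.univ g = 1
  minimal : ∀ i, ∀ c : Fin (t + 1) → ℕ, ∑ j, c j * g j = g i → c = Pi.single i 1

/-- `S` is additive: `ord(u + e) = ord(u) + 1` for all `u ∈ S`. -/
def IsAdditive {t : ℕ} (g : Fin (t + 1) → ℕ) : Prop :=
  ∀ u ∈ Sg g, ordOf g (u + g 0) = ordOf g u + 1

/-- Membership of an integer in a set of naturals. -/
def ZMem (T : Set ℕ) (z : ℤ) : Prop := 0 ≤ z ∧ z.toNat ∈ T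

/-- The Frobenius number: the largest integer not in `T`. -/
noncomputable def Frob (T : Set ℕ) : ℤ := sSup {z : ℤ | ¬ ZMem T z}

/-- `T` is symmetric: whenever `x + y = F(T)`, exactly one of `x`, `y` lies in `T`. -/
def Symm (T : Set ℕ) : Prop := ∀ x y : ℤ, x + y = Frob T → (ZMem T x ↔ ¬ ZMem T y)

/-- An abstract numerical semigroup. -/
structure IsNumSemigroup (T : Set ℕ) : Prop where
  zero_mem : 0 ∈ T
  add_mem : ∀ a ∈ T, ∀ b ∈ T, a + b ∈ T
  cofinite : Tᶜ.Finite

/-- The Apery set of an abstract numerical semigroup. -/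
def ApS (T : Set ℕ) (u : ℕ) : Set ℕ := {w ∈ T | ¬ ∃ b ∈ T, w = b + u}

/-!
Write a factorization `c` of `n` over `e, e + d, e + 2d` as `n = L e + T d`, with length
`L = c₀ + c₁ + c₂` and weight `T = c₁ + 2 c₂`. Since `e · d = d · e`, a factorization of weight
`T ≥ e` can trade `e` units of weight for `d` units of length, so a maximal-length factorization
has `T < e`; as `d > 0`, all maximal-length factorizations of `n` share `L` and `T`, and are then
determined by `c₂ ≤ T / 2`. This gives at most `⌊(e - 1)/2⌋ + 1 = ⌈e/2⌉` of them. Conversely, for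
`n = (e - 1)(e + d)` coprimality forces `L ≤ e - 1`, and the factorizations
`(j, e - 1 - 2j, j)`, `j ≤ (e - 1)/2`, are exactly the maximal ones.
-/

section Order

variable {t : ℕ} {g : Fin (t + 1) → ℕ} {n : ℕ}

lemma sum_le_of_mem_Fac (hg : ∀ i, 0 < g i) {c : Fin (t + 1) → ℕ} (hc : c ∈ Fac g n) :
    ∑ i, c i ≤ n :=
  hc ▸ Finset.sum_le_sum fun i _ => Nat.le_mul_of_pos_right _ (hg i)

lemma bddAbove_lengths_Fac (hg : ∀ i, 0 < g i) :
    BddAbove {r | ∃ c ∈ Fac g n, ∑ i, c i = r} :=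
  ⟨n, by rintro _ ⟨c, hc, rfl⟩; exact sum_le_of_mem_Fac hg hc⟩

lemma sum_le_ordOf (hg : ∀ i, 0 < g i) {c : Fin (t + 1) → ℕ} (hc : c ∈ Fac g n) :
    ∑ i, c i ≤ ordOf g n :=
  le_csSup (bddAbove_lengths_Fac hg) ⟨c, hc, rfl⟩

lemma exists_sum_eq_ordOf (hg : ∀ i, 0 < g i) (hn : n ∈ Sg g) :
    ∃ c ∈ Fac g n, ∑ i, c i = ordOf g n := by
  obtain ⟨c, hc⟩ := hn
  exact Nat.sSup_mem (s := {r | ∃ c ∈ Fac g n, ∑ i, c i = r}) ⟨_, c, hc, rfl⟩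
    (bddAbove_lengths_Fac hg)

lemma ordOf_eq_of_forall_sum_le {c : Fin (t + 1) → ℕ} (hc : c ∈ Fac g n)
    (h : ∀ c' ∈ Fac g n, ∑ i, c' i ≤ ∑ i, c i) : ordOf g n = ∑ i, c i :=
  IsGreatest.csSup_eq ⟨⟨c, hc, rfl⟩, by rintro _ ⟨c', hc', rfl⟩; exact h c' hc'⟩

end Order

lemma le_of_mul_add_mul_eq_of_coprime {e d L T M N : ℕ} (hcop : e.Coprime d) (hN : N < e)
    (h : L * e + T * d = M * e + N * d) : L ≤ M := by
  by_contra! hML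
  obtain ⟨k, rfl⟩ := Nat.exists_eq_add_of_lt hML
  have hk : (k + 1) * e + T * d = N * d := by linarith
  have hTN : T < N := by
    by_contra! hNT
    have := Nat.mul_le_mul_right d hNT
    nlinarith
  have hdvd : e ∣ (N - T) * d := ⟨k + 1, by rw [Nat.sub_mul, mul_comm e]; omega⟩
  have := Nat.le_of_dvd (by omega) (hcop.dvd_of_dvd_mul_right hdvd)
  omega

def arithGens (e d : ℕ) : Fin 3 → ℕ := fun i => e + (i : ℕ) * d

section Arith

variable {e d n : ℕ}

lemma mem_Fac_arithGens_iff {c : Fin 3 → ℕ} :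
    c ∈ Fac (arithGens e d) n ↔ (∑ i, c i) * e + (c 1 + 2 * c 2) * d = n := by
  simp only [Fac, arithGens, Set.mem_ofPred_eq, Fin.sum_univ_succ, Fin.sum_univ_zero]
  constructor <;> rintro rfl <;>
    simp only [Fin.isValue, Fin.succ_zero_eq_one, Fin.succ_one_eq_two, add_zero,
      Fin.coe_ofNat_eq_mod, Nat.zero_mod, zero_mul, Nat.one_mod, one_mul, Nat.mod_succ] <;> ring

lemma arithGens_pos (he : 0 < e) (i : Fin 3) : 0 < arithGens e d i :=
  Nat.add_pos_left he _

lemma mem_Fac_arithGens_middle (m : ℕ) : ![0, m, 0] ∈ Fac (arithGens e d) (m * (e + d)) := by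
  rw [mem_Fac_arithGens_iff]
  simp only [Fin.sum_univ_three, Matrix.cons_val_zero, Matrix.cons_val_one, Matrix.cons_val]
  ring

lemma exists_sum_eq_and_weight_eq {L T : ℕ} (h : T ≤ 2 * L) :
    ∃ c : Fin 3 → ℕ, ∑ i, c i = L ∧ c 1 + 2 * c 2 = T :=
  ⟨![L - T % 2 - T / 2, T % 2, T / 2],
    by
      simp only [Fin.sum_univ_three, Matrix.cons_val_zero, Matrix.cons_val_one, Matrix.cons_val]
      omega,
    by simp only [Matrix.cons_val_one, Matrix.cons_val]; omega⟩

lemma weight_lt_of_sum_eq_ordOf (he : 0 < e) (hd : 0 < d) {c : Fin 3 → ℕ}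
    (hc : c ∈ Fac (arithGens e d) n) (hmax : ∑ i, c i = ordOf (arithGens e d) n) :
    c 1 + 2 * c 2 < e := by
  by_contra! hT
  obtain ⟨c', hlen, hwt⟩ := exists_sum_eq_and_weight_eq
    (L := ∑ i, c i + d) (T := c 1 + 2 * c 2 - e) (by simp only [Fin.sum_univ_three]; omega)
  have hc' : c' ∈ Fac (arithGens e d) n := by
    rw [mem_Fac_arithGens_iff] at hc ⊢
    rw [hlen, hwt, ← hc, Nat.sub_mul, add_mul, mul_comm d e]
    have := Nat.mul_le_mul_right d hT
    omega
  have := sum_le_ordOf (arithGens_pos he) hc'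
  rw [hlen, ← hmax] at this
  omega

lemma dmaxEl_arithGens_eq_ncard (hd : 0 < d) {c₀ : Fin 3 → ℕ}
    (hc₀ : c₀ ∈ Fac (arithGens e d) n) (hmax : ∑ i, c₀ i = ordOf (arithGens e d) n) :
    dmaxEl (arithGens e d) n =
      {c : Fin 3 → ℕ | ∑ i, c i = ∑ i, c₀ i ∧ c 1 + 2 * c 2 = c₀ 1 + 2 * c₀ 2}.ncard := by
  rw [mem_Fac_arithGens_iff] at hc₀
  unfold dmaxEl
  congr 1
  ext c
  rw [Set.mem_sep_iff, mem_Fac_arithGens_iff, ← hmax]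
  constructor
  · rintro ⟨hc, hlen⟩
    rw [hlen, ← hc₀] at hc
    exact ⟨hlen, Nat.eq_of_mul_eq_mul_right hd (Nat.add_left_cancel hc)⟩
  · rintro ⟨hlen, hwt⟩
    exact ⟨by rw [hlen, hwt, hc₀], hlen⟩

lemma ncard_sum_eq_and_weight_eq_le (L T : ℕ) :
    {c : Fin 3 → ℕ | ∑ i, c i = L ∧ c 1 + 2 * c 2 = T}.ncard ≤ T / 2 + 1 := by
  have hinj : Set.InjOn (fun c : Fin 3 → ℕ => c 2)
      {c : Fin 3 → ℕ | ∑ i, c i = L ∧ c 1 + 2 * c 2 = T} := by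
    rintro a ⟨ha, ha'⟩ b ⟨hb, hb'⟩ (h : a 2 = b 2)
    simp only [Fin.sum_univ_three] at ha hb
    ext i
    fin_cases i <;> simp only [Fin.isValue, Fin.zero_eta, Fin.mk_one, Fin.reduceFinMk] <;> omega
  calc _ ≤ (Set.Iic (T / 2)).ncard :=
        Set.ncard_le_ncard_of_injOn _ (fun c (hc : _ ∧ _) => by simp only [Set.mem_Iic]; omega) hinj
          (Set.finite_Iic _)
    _ = T / 2 + 1 := Set.ncard_Iic_nat _

lemma ncard_sum_eq_and_weight_eq {L T : ℕ} (h : T ≤ L) :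
    {c : Fin 3 → ℕ | ∑ i, c i = L ∧ c 1 + 2 * c 2 = T}.ncard = T / 2 + 1 := by
  have himage : {c : Fin 3 → ℕ | ∑ i, c i = L ∧ c 1 + 2 * c 2 = T} =
      (fun j => ![L - T + j, T - 2 * j, j]) '' Set.Iic (T / 2) := by
    ext c
    constructor
    · rintro ⟨hL, hT⟩
      simp only [Fin.sum_univ_three] at hL
      refine ⟨c 2, by simp only [Set.mem_Iic]; omega, ?_⟩
      ext i
      fin_cases i <;>
        simp only [Fin.isValue, Fin.zero_eta, Fin.mk_one, Fin.reduceFinMk, Matrix.cons_val_zero,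
          Matrix.cons_val_one, Matrix.cons_val] <;> omega
    · rintro ⟨j, hj, rfl⟩
      simp only [Set.mem_Iic] at hj
      simp only [Fin.sum_univ_three, Set.mem_ofPred_eq, Matrix.cons_val_zero, Matrix.cons_val_one,
        Matrix.cons_val]
      omega
  rw [himage, Set.InjOn.ncard_image (fun a _ b _ hab => by simpa using congrFun hab 2),
    Set.ncard_Iic_nat]

lemma dmaxEl_arithGens_le (he : 0 < e) (hd : 0 < d) (hn : n ∈ Sg (arithGens e d)) :
    dmaxEl (arithGens e d) n ≤ (e + 1) / 2 := by
  obtain ⟨c₀, hc₀, hmax⟩ := exists_sum_eq_ordOf (arithGens_pos he) hn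
  have hT := weight_lt_of_sum_eq_ordOf he hd hc₀ hmax
  rw [dmaxEl_arithGens_eq_ncard hd hc₀ hmax]
  exact (ncard_sum_eq_and_weight_eq_le _ _).trans (by omega)

lemma dmaxEl_arithGens_sub_one_mul (he : 0 < e) (hd : 0 < d) (hcop : e.Coprime d) :
    dmaxEl (arithGens e d) ((e - 1) * (e + d)) = (e + 1) / 2 := by
  set c₀ : Fin 3 → ℕ := ![0, e - 1, 0]
  have hlen : ∑ i, c₀ i = e - 1 := by simp [c₀, Fin.sum_univ_three]
  have hc₀ : c₀ ∈ Fac (arithGens e d) ((e - 1) * (e + d)) := mem_Fac_arithGens_middle _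
  have hmax : ∑ i, c₀ i = ordOf (arithGens e d) ((e - 1) * (e + d)) := by
    refine (ordOf_eq_of_forall_sum_le hc₀ fun c hc => ?_).symm
    rw [mem_Fac_arithGens_iff] at hc
    rw [hlen]
    exact le_of_mul_add_mul_eq_of_coprime (M := e - 1) (N := e - 1) hcop (by omega)
      (by rw [hc]; ring)
  rw [dmaxEl_arithGens_eq_ncard hd hc₀ hmax, ncard_sum_eq_and_weight_eq (by simp [c₀, hlen])]
  simp only [c₀, Matrix.cons_val_one, Matrix.cons_val, mul_zero, add_zero]
  omega

theorem dmax_arithGens (he : 1 < e) (hcop : e.Coprime d) :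
    dmax (arithGens e d) = (e + 1) / 2 := by
  have hd : 0 < d := Nat.pos_of_ne_zero <| by
    rintro rfl
    rw [Nat.coprime_zero_right] at hcop
    omega
  refine IsGreatest.csSup_eq ⟨⟨_, ⟨_, mem_Fac_arithGens_middle _⟩,
    dmaxEl_arithGens_sub_one_mul (by omega) hd hcop⟩, ?_⟩
  rintro _ ⟨n, hn, rfl⟩
  exact dmaxEl_arithGens_le (by omega) hd hn

end Arith

/-- The embedding dimension 3 arithmetic case: `d_max(⟨e, e+d, e+2d⟩) = ⌈e/2⌉`. -/
theorem stmt18 (e d : ℕ) (he : 3 ≤ e) (hgcd : Nat.gcd e d = 1) :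
    (dmax (fun i : Fin 3 => e + (i : ℕ) * d) : ℤ) = ⌈(e : ℚ) / 2⌉ := by
  have hceil := Rat.ceil_natCast_div_natCast e 2
  push_cast at hceil
  rw [show (fun i : Fin 3 => e + (i : ℕ) * d) = arithGens e d from rfl,
    dmax_arithGens (by omega) hgcd, hceil]
  omega
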